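/- arXiv:2405.10182 — 3 statements merged into one kernel-verified Lean document; each statement's English description precedes it below -/
import Mathlib

section
/- Let x, y ≥ 0, γ ∈ (0,1), and K > 1. If |x − y| ≤ x/K then |⟨x⟩^γ − ⟨y⟩^γ| ≤ (γ/(K−1)^{1−γ})·⟨x−y⟩^γ. -/
/-- The Japanese bracket `⟨x⟩ = √(1+x²)`. -/
noncomputable def jap (x : ℝ) : ℝ := Real.sqrt (1 + x ^ 2)

lemma jap_nonneg (t : ℝ) : 0 ≤ jap t := Real.sqrt_nonneg _

lemma abs_le_jap (t : ℝ) : |t| ≤ jap t := by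
  rw [jap, ← Real.sqrt_sq_eq_abs]
  exact Real.sqrt_le_sqrt (by nlinarith)

lemma jap_mono {s t : ℝ} (hs : 0 ≤ s) (hst : s ≤ t) : jap s ≤ jap t :=
  Real.sqrt_le_sqrt (by nlinarith)

lemma jap_lip {s t : ℝ} (hs : 0 ≤ s) (hst : s ≤ t) : jap t - jap s ≤ t - s := by
  have h1 : jap s ^ 2 = 1 + s ^ 2 := Real.sq_sqrt (by positivity)
  have h2 : s ≤ jap s := (le_abs_self s).trans (abs_le_jap s)
  have h3 : 0 ≤ jap s := jap_nonneg s
  have : jap t ≤ (t - s) + jap s := by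
    rw [jap, show (t - s) + jap s = Real.sqrt (((t - s) + jap s) ^ 2) from
      (Real.sqrt_sq (by linarith)).symm]
    exact Real.sqrt_le_sqrt (by nlinarith)
  linarith

lemma slope_lem {a b γ : ℝ} (ha : 0 < a) (hab : a ≤ b) (hγ0 : 0 < γ) (hγ1 : γ < 1) :
    b ^ γ - a ^ γ ≤ γ * a ^ (γ - 1) * (b - a) := by
  rcases eq_or_lt_of_le hab with rfl | hlt
  · simp
  have hcont : ContinuousOn (fun t : ℝ => t ^ γ) (Set.Icc a b) := by
    intro t ht
    exact (Real.continuousAt_rpow_const t γ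
      (Or.inl (ne_of_gt (lt_of_lt_of_le ha ht.1)))).continuousWithinAt
  have hderiv : ∀ t ∈ Set.Ioo a b, HasDerivAt (fun t : ℝ => t ^ γ) (γ * t ^ (γ - 1)) t := by
    intro t ht
    exact Real.hasDerivAt_rpow_const (Or.inl (ne_of_gt (lt_trans ha ht.1)))
  obtain ⟨c, hc, hceq⟩ := exists_hasDerivAt_eq_slope (fun t : ℝ => t ^ γ)
    (fun t => γ * t ^ (γ - 1)) hlt hcont hderiv
  have hcge : c ^ (γ - 1) ≤ a ^ (γ - 1) :=
    Real.rpow_le_rpow_of_nonpos ha hc.1.le (by linarith)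
  have heq : b ^ γ - a ^ γ = γ * c ^ (γ - 1) * (b - a) := by
    rw [hceq, div_mul_cancel₀ _ (by linarith : b - a ≠ 0)]
  rw [heq]
  exact mul_le_mul_of_nonneg_right (mul_le_mul_of_nonneg_left hcge hγ0.le) (by linarith)

lemma jap_key {γ K d m M : ℝ} (hγ0 : 0 < γ) (hγ1 : γ < 1) (hK1 : 0 < K - 1)
    (hm : 0 ≤ m) (hmM : m ≤ M) (hMm : M - m = d) (hdpos : 0 < d)
    (hmd : (K - 1) * d ≤ m) :
    jap M ^ γ - jap m ^ γ ≤ (γ / (K - 1) ^ (1 - γ)) * d ^ γ := by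
  set A := jap m with hA
  set B := jap M with hB
  have hmjap : m ≤ A := (le_abs_self m).trans (abs_le_jap m)
  have hApos : 0 < A := lt_of_lt_of_le (by nlinarith) hmjap
  have hAlb : (K - 1) * d ≤ A := le_trans hmd hmjap
  have hAB : A ≤ B := jap_mono hm hmM
  have hBA : B - A ≤ d := by have := jap_lip hm hmM; linarith
  have hApow : (0 : ℝ) ≤ A ^ (γ - 1) := Real.rpow_nonneg hApos.le _
  have step1 : B ^ γ - A ^ γ ≤ γ * A ^ (γ - 1) * d := by
    refine le_trans (slope_lem hApos hAB hγ0 hγ1) ?_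
    exact mul_le_mul_of_nonneg_left hBA (by positivity)
  have step2 : A ^ (γ - 1) ≤ ((K - 1) * d) ^ (γ - 1) :=
    Real.rpow_le_rpow_of_nonpos (by nlinarith) hAlb (by linarith)
  have hmul : ((K - 1) * d) ^ (γ - 1) = (K - 1) ^ (γ - 1) * d ^ (γ - 1) :=
    Real.mul_rpow hK1.le hdpos.le
  have hdpow : d ^ (γ - 1) * d = d ^ γ := by
    rw [show γ = γ - 1 + 1 by ring, Real.rpow_add_one hdpos.ne' (γ - 1)]
    ring_nf
  have hKpow : (K - 1) ^ (γ - 1) = ((K - 1) ^ (1 - γ))⁻¹ := by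
    rw [show γ - 1 = -(1 - γ) by ring, Real.rpow_neg hK1.le]
  calc B ^ γ - A ^ γ ≤ γ * A ^ (γ - 1) * d := step1
    _ ≤ γ * ((K - 1) ^ (γ - 1) * d ^ (γ - 1)) * d := by
        rw [← hmul]
        exact mul_le_mul_of_nonneg_right (mul_le_mul_of_nonneg_left step2 hγ0.le) hdpos.le
    _ = (γ / (K - 1) ^ (1 - γ)) * d ^ γ := by
        rw [hKpow, div_eq_mul_inv, ← hdpow]; ring

/-- If `x, y ≥ 0`, `γ ∈ (0,1)`, `K > 1` and `|x − y| ≤ x/K`, then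
`|⟨x⟩^γ − ⟨y⟩^γ| ≤ (γ/(K−1)^{1−γ}) ⟨x−y⟩^γ`. -/
theorem gevrey_close_frequency_inequality (γ K x y : ℝ)
    (hγ0 : 0 < γ) (hγ1 : γ < 1) (hK : 1 < K)
    (hx : 0 ≤ x) (hy : 0 ≤ y) (hxy : |x - y| ≤ x / K) :
    |jap x ^ γ - jap y ^ γ| ≤ (γ / (K - 1) ^ (1 - γ)) * jap (x - y) ^ γ := by
  have hK1 : (0 : ℝ) < K - 1 := by linarith
  set d := |x - y| with hd
  have hd0 : 0 ≤ d := abs_nonneg _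
  have hKd : K * d ≤ x := by
    rw [le_div_iff₀ (by linarith)] at hxy
    linarith [hxy]
  rcases eq_or_lt_of_le hd0 with hd0' | hdpos
  · have hxy0 : x = y := by have := abs_eq_zero.mp hd0'.symm; linarith
    subst hxy0
    simp only [sub_self, abs_zero]
    exact mul_nonneg (by positivity) (Real.rpow_nonneg (jap_nonneg _) _)
  have hdjap : d ^ γ ≤ jap (x - y) ^ γ :=
    Real.rpow_le_rpow hd0 (abs_le_jap _) hγ0.le
  have hcoef : (0 : ℝ) ≤ γ / (K - 1) ^ (1 - γ) := by positivity
  have hfinal : ∀ m M : ℝ, 0 ≤ m → m ≤ M → M - m = d → (K - 1) * d ≤ m →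
      jap M ^ γ - jap m ^ γ ≤ (γ / (K - 1) ^ (1 - γ)) * jap (x - y) ^ γ := by
    intro m M h1 h2 h3 h4
    refine le_trans (jap_key hγ0 hγ1 hK1 h1 h2 h3 hdpos h4) ?_
    exact mul_le_mul_of_nonneg_left hdjap hcoef
  rcases abs_sub_le_iff.mp (le_refl d) with ⟨hub1, hub2⟩
  rcases le_total x y with h | h
  · have hmd : (K - 1) * d ≤ x := by nlinarith
    have hMm : y - x = d := by rw [hd, abs_sub_comm, abs_of_nonneg (by linarith)]
    have key := hfinal x y hx h hMm hmd
    have hle : jap x ^ γ ≤ jap y ^ γ :=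
      Real.rpow_le_rpow (jap_nonneg x) (jap_mono hx h) hγ0.le
    rw [abs_sub_comm, abs_of_nonneg (by linarith)]
    linarith
  · have hmd : (K - 1) * d ≤ y := by nlinarith
    have hMm : x - y = d := by rw [hd, abs_of_nonneg (by linarith)]
    have key := hfinal y x hy h hMm hmd
    have hle : jap y ^ γ ≤ jap x ^ γ :=
      Real.rpow_le_rpow (jap_nonneg y) (jap_mono hy h) hγ0.le
    rw [abs_of_nonneg (by linarith)]
    linarith
end

section
/- Let x, y ≥ 0, γ ∈ (0,1), λ > 0 with |x − y| < x/2. Then there exists c ∈ (0,1) and a constant C such that |e^{λx^γ} − e^{λy^γ}| ≤ λ·C·(|x−y|/(x^{1−γ} + y^{1−γ}))·e^{cλ|x−y|^γ}·e^{λx^γ}. -/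
/-!
Put `u = λ x ^ γ` and `v = λ y ^ γ`. Convexity of `exp` gives `|e^u - e^v| ≤ |u - v| e^{|u - v|} e^u`.
Concavity of `t ↦ t ^ γ` bounds `|x ^ γ - y ^ γ|` by `γ |x - y| min(x, y) ^ (γ - 1)`. Since
`|x - y| < min(x, y)`, this is at most `γ |x - y| ^ γ`, which yields `c = γ`; since `x` and `y` are
within a factor `2` of each other, `min(x, y) ^ (1 - γ)` is comparable to `x ^ (1 - γ) + y ^ (1 - γ)`,
which yields `C = 4`.
-/

open Real

namespace Real

lemma exp_sub_exp_le_mul_exp (a b : ℝ) : exp a - exp b ≤ (a - b) * exp a := by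
  have := mul_le_mul_of_nonneg_left (add_one_le_exp (b - a)) (exp_pos a).le
  rw [← exp_add, add_sub_cancel] at this
  nlinarith

lemma abs_exp_sub_exp_le (a b : ℝ) :
    |exp a - exp b| ≤ |a - b| * exp |a - b| * exp a := by
  have hexp : ∀ s, s ≤ |a - b| + a → exp s ≤ exp |a - b| * exp a := fun s hs => by
    rw [← exp_add]; exact exp_le_exp.mpr hs
  rw [abs_sub_le_iff, mul_assoc]
  constructor
  · calc exp a - exp b ≤ (a - b) * exp a := exp_sub_exp_le_mul_exp a b
      _ ≤ |a - b| * (exp |a - b| * exp a) :=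
          mul_le_mul (le_abs_self _) (hexp a (by linarith [abs_nonneg (a - b)]))
            (exp_pos a).le (abs_nonneg _)
  · calc exp b - exp a ≤ (b - a) * exp b := exp_sub_exp_le_mul_exp b a
      _ ≤ |a - b| * (exp |a - b| * exp a) :=
          mul_le_mul (abs_sub_comm a b ▸ le_abs_self _) (hexp b (by linarith [neg_abs_le (a - b)]))
            (exp_pos b).le (abs_nonneg _)

lemma rpow_le_rpow_add_mul_rpow_sub_one {a b p : ℝ} (ha : 0 ≤ a) (hb : 0 < b) (hp₀ : 0 ≤ p)
    (hp₁ : p ≤ 1) : a ^ p ≤ b ^ p + p * (a - b) * b ^ (p - 1) := by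
  have hs : -1 ≤ (a - b) / b := by rw [le_div_iff₀ hb]; linarith
  have hab : a = b * (1 + (a - b) / b) := by field_simp; ring
  calc a ^ p = b ^ p * (1 + (a - b) / b) ^ p := by
        rw [← mul_rpow hb.le (by linarith)]; exact congrArg (· ^ p) hab
    _ ≤ b ^ p * (1 + p * ((a - b) / b)) := by
        gcongr; exact rpow_one_add_le_one_add_mul_self hs hp₀ hp₁
    _ = b ^ p + p * (a - b) * b ^ (p - 1) := by
        rw [rpow_sub_one hb.ne']; field_simp

lemma rpow_sub_rpow_le_mul_abs_sub_mul_rpow {a b p : ℝ} (ha : 0 ≤ a) (hb : 0 < b) (hp₀ : 0 ≤ p)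
    (hp₁ : p ≤ 1) : a ^ p - b ^ p ≤ p * |a - b| * b ^ (p - 1) := by
  have := rpow_le_rpow_add_mul_rpow_sub_one ha hb hp₀ hp₁
  have : p * (a - b) ≤ p * |a - b| := mul_le_mul_of_nonneg_left (le_abs_self _) hp₀
  nlinarith [rpow_nonneg hb.le (p - 1)]

lemma abs_rpow_sub_rpow_le {x y p : ℝ} (hx : 0 < x) (hy : 0 < y) (hp₀ : 0 ≤ p) (hp₁ : p ≤ 1) :
    |x ^ p - y ^ p| ≤ p * |x - y| * min x y ^ (p - 1) := by
  have hm : 0 < min x y := lt_min hx hy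
  have hxm : x ^ (p - 1) ≤ min x y ^ (p - 1) :=
    rpow_le_rpow_of_nonpos hm (min_le_left x y) (by linarith)
  have hym : y ^ (p - 1) ≤ min x y ^ (p - 1) :=
    rpow_le_rpow_of_nonpos hm (min_le_right x y) (by linarith)
  rw [abs_sub_le_iff]
  constructor
  · calc x ^ p - y ^ p ≤ p * |x - y| * y ^ (p - 1) :=
          rpow_sub_rpow_le_mul_abs_sub_mul_rpow hx.le hy hp₀ hp₁
      _ ≤ p * |x - y| * min x y ^ (p - 1) := by gcongr
  · calc y ^ p - x ^ p ≤ p * |x - y| * x ^ (p - 1) := by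
          rw [abs_sub_comm]; exact rpow_sub_rpow_le_mul_abs_sub_mul_rpow hy.le hx hp₀ hp₁
      _ ≤ p * |x - y| * min x y ^ (p - 1) := by gcongr

lemma abs_rpow_sub_rpow_le_mul_abs_sub_rpow {x y p : ℝ} (hx : 0 < x) (hy : 0 < y) (hp₀ : 0 < p)
    (hp₁ : p ≤ 1) (hxy : |x - y| ≤ min x y) : |x ^ p - y ^ p| ≤ p * |x - y| ^ p := by
  rcases (abs_nonneg (x - y)).eq_or_lt with hd | hd
  · obtain rfl : x = y := sub_eq_zero.mp (abs_eq_zero.mp hd.symm)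
    simp [zero_rpow hp₀.ne']
  calc |x ^ p - y ^ p| ≤ p * |x - y| * min x y ^ (p - 1) := abs_rpow_sub_rpow_le hx hy hp₀.le hp₁
    _ ≤ p * |x - y| * |x - y| ^ (p - 1) := by
        gcongr ?_ * ?_
        exact rpow_le_rpow_of_nonpos hd hxy (by linarith)
    _ = p * |x - y| ^ p := by
        rw [mul_assoc, ← rpow_one_add' hd.le (by simp [hp₀.ne'])]; ring_nf

lemma rpow_le_two_mul_rpow {a b q : ℝ} (ha : 0 ≤ a) (hab : a ≤ 2 * b) (hq₀ : 0 ≤ q) (hq₁ : q ≤ 1) :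
    a ^ q ≤ 2 * b ^ q := by
  have hb : 0 ≤ b := by linarith
  calc a ^ q ≤ (2 * b) ^ q := rpow_le_rpow ha hab hq₀
    _ = 2 ^ q * b ^ q := mul_rpow zero_le_two hb
    _ ≤ 2 * b ^ q := by
        gcongr
        simpa using rpow_le_rpow_of_exponent_le one_le_two hq₁

lemma abs_rpow_sub_rpow_le_div {x y p : ℝ} (hx : 0 < x) (hy : 0 < y) (hp₀ : 0 ≤ p) (hp₁ : p ≤ 1)
    (hxy : x ≤ 2 * y) (hyx : y ≤ 2 * x) :
    |x ^ p - y ^ p| ≤ 4 * (|x - y| / (x ^ (1 - p) + y ^ (1 - p))) := by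
  have hm : 0 < min x y := lt_min hx hy
  have hsum : x ^ (1 - p) + y ^ (1 - p) ≤ 4 * min x y ^ (1 - p) := by
    have hx2 : x ≤ 2 * min x y := by rcases min_cases x y with ⟨h, -⟩ | ⟨h, -⟩ <;> linarith
    have hy2 : y ≤ 2 * min x y := by rcases min_cases x y with ⟨h, -⟩ | ⟨h, -⟩ <;> linarith
    have := rpow_le_two_mul_rpow hx.le hx2 (sub_nonneg.mpr hp₁) (by linarith)
    have := rpow_le_two_mul_rpow hy.le hy2 (sub_nonneg.mpr hp₁) (by linarith)
    linarith
  have hpos : 0 < x ^ (1 - p) + y ^ (1 - p) := by positivity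
  calc |x ^ p - y ^ p| ≤ p * |x - y| * min x y ^ (p - 1) := abs_rpow_sub_rpow_le hx hy hp₀ hp₁
    _ ≤ 1 * |x - y| * min x y ^ (p - 1) := by gcongr
    _ = |x - y| / min x y ^ (1 - p) := by
        rw [show p - 1 = -(1 - p) by ring, rpow_neg hm.le]; ring
    _ ≤ |x - y| / ((x ^ (1 - p) + y ^ (1 - p)) / 4) := by
        gcongr; linarith
    _ = 4 * (|x - y| / (x ^ (1 - p) + y ^ (1 - p))) := by field_simp

end Real

/-- Difference of Gevrey exponentials: for `γ ∈ (0,1)` and `λ > 0` there exist `c ∈ (0,1)` and a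
constant `C` such that whenever `x, y ≥ 0` and `|x − y| < x/2`,
`|e^{λx^γ} − e^{λy^γ}| ≤ λ C (|x−y|/(x^{1−γ}+y^{1−γ})) e^{cλ|x−y|^γ} e^{λx^γ}`. -/
theorem gevrey_exponential_difference (γ lam : ℝ) (hγ0 : 0 < γ) (hγ1 : γ < 1)
    (hlam : 0 < lam) :
    ∃ c ∈ Set.Ioo (0 : ℝ) 1, ∃ C : ℝ, ∀ x y : ℝ, 0 ≤ x → 0 ≤ y → |x - y| < x / 2 →
      |Real.exp (lam * x ^ γ) - Real.exp (lam * y ^ γ)| ≤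
        lam * C * (|x - y| / (x ^ (1 - γ) + y ^ (1 - γ))) *
          Real.exp (c * lam * |x - y| ^ γ) * Real.exp (lam * x ^ γ) := by
  refine ⟨γ, ⟨hγ0, hγ1⟩, 4, fun x y _ _ hxy => ?_⟩
  obtain ⟨hxy₁, hxy₂⟩ := abs_sub_lt_iff.mp hxy
  have hx : 0 < x := by linarith [abs_nonneg (x - y)]
  have hy : 0 < y := by linarith
  have hHolder : |x ^ γ - y ^ γ| ≤ γ * |x - y| ^ γ :=
    abs_rpow_sub_rpow_le_mul_abs_sub_rpow hx hy hγ0 hγ1.le (le_min (by linarith) (by linarith))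
  have hLipschitz : |x ^ γ - y ^ γ| ≤ 4 * (|x - y| / (x ^ (1 - γ) + y ^ (1 - γ))) :=
    abs_rpow_sub_rpow_le_div hx hy hγ0.le hγ1.le (by linarith) (by linarith)
  calc |exp (lam * x ^ γ) - exp (lam * y ^ γ)|
      ≤ lam * |x ^ γ - y ^ γ| * exp (lam * |x ^ γ - y ^ γ|) * exp (lam * x ^ γ) := by
        have := abs_exp_sub_exp_le (lam * x ^ γ) (lam * y ^ γ)
        rwa [← mul_sub, abs_mul, abs_of_pos hlam] at this
    _ ≤ lam * (4 * (|x - y| / (x ^ (1 - γ) + y ^ (1 - γ)))) * exp (lam * (γ * |x - y| ^ γ)) *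
          exp (lam * x ^ γ) := by gcongr
    _ = _ := by ring_nf
end

section
/- Let d ≥ 1, σ > d/2, γ ∈ (0,1], z ≥ 0, t ∈ ℝ, and let ω : 𝕋^d → ℝ be a function with Fourier coefficients ω̂(k). Define the Gevrey norm ‖A ω‖²_{L²} = ∑_{k∈ℤ^d} e^{2z⟨(k,kt)⟩^γ} ⟨(k,kt)⟩^{2σ} |ω̂(k)|². Then there is a constant C (depending only on σ, d, γ) such that ‖A(ω²)‖_{L²} ≤ C‖Aω‖²_{L²}, i.e. the Gevrey space with weight A is an algebra under pointwise multiplication. -/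
/-- The bracket `⟨(k,kt)⟩ = √(1+|k|²+|kt|²)` for `k ∈ ℤ^d`. -/
noncomputable def brkt (d : ℕ) (t : ℝ) (k : Fin d → ℤ) : ℝ :=
  Real.sqrt (1 + (∑ i, ((k i : ℝ)) ^ 2) + t ^ 2 * ∑ i, ((k i : ℝ)) ^ 2)

/-- The Gevrey weight `A_z(k,kt) = e^{z⟨(k,kt)⟩^γ} ⟨(k,kt)⟩^σ`. -/
noncomputable def wA (d : ℕ) (γ z σ t : ℝ) (k : Fin d → ℤ) : ℝ :=
  Real.exp (z * brkt d t k ^ γ) * brkt d t k ^ σ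

/-- The Gevrey norm `‖Aω‖_{L²}` of a function on `𝕋^d`, expressed through its Fourier
coefficients: `‖Aω‖²_{L²} = ∑_k e^{2z⟨(k,kt)⟩^γ} ⟨(k,kt)⟩^{2σ} |ω̂(k)|²`. -/
noncomputable def gnorm (d : ℕ) (γ z σ t : ℝ) (w : (Fin d → ℤ) → ℂ) : ℝ :=
  Real.sqrt (∑' k : Fin d → ℤ, wA d γ z σ t k ^ 2 * ‖w k‖ ^ 2)

/-- Fourier coefficients of a pointwise product: convolution of the coefficients. -/
noncomputable def convFC (d : ℕ) (f g : (Fin d → ℤ) → ℂ) : (Fin d → ℤ) → ℂ :=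
  fun k => ∑' ℓ : Fin d → ℤ, f (k - ℓ) * g ℓ

open scoped NNReal ENNReal

/-! Since `⟨k⟩ ≤ ⟨k - ℓ⟩ + ⟨ℓ⟩` and `γ ≤ 1`, the weight splits over a convolution:
`A(k) ≤ 2^σ (A(k - ℓ) e^{z⟨ℓ⟩^γ} + e^{z⟨k - ℓ⟩^γ} A(ℓ))`. Hence `A |ω̂ * ω̂|` is bounded by
`2^{σ+1} (A|ω̂|) * (e^{z⟨·⟩^γ}|ω̂|)`, and Young's inequality `ℓ² * ℓ¹ ⊆ ℓ²` leaves the `ℓ¹` norm of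
`e^{z⟨·⟩^γ}|ω̂| = ⟨·⟩^{-σ} A|ω̂|`, which by Cauchy–Schwarz is at most `‖Aω‖ (∑_k ⟨k⟩^{-2σ})^{1/2}`.
The last sum is bounded uniformly in `t` by its value at `t = 0`, finite because `2σ > d`.
All sums are taken in `ℝ≥0∞`, where they need no summability side conditions. -/

namespace ENNReal

lemma two_mul_mul_le_sq_add_sq (x y : ℝ≥0∞) : 2 * x * y ≤ x ^ 2 + y ^ 2 := by
  rcases eq_top_or_lt_top x with rfl | hx
  · simp
  rcases eq_top_or_lt_top y with rfl | hy
  · simp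
  lift x to ℝ≥0 using hx.ne
  lift y to ℝ≥0 using hy.ne
  exact_mod_cast NNReal.coe_le_coe.1 (by push_cast; exact two_mul_le_add_sq (x : ℝ) y)

variable {ι : Type*}

lemma tsum_mul_tsum_eq_tsum_tsum (f g : ι → ℝ≥0∞) :
    (∑' i, f i) * ∑' j, g j = ∑' i, ∑' j, f i * g j := by
  simp_rw [ENNReal.tsum_mul_left, ENNReal.tsum_mul_right]

lemma tsum_mul_mul_sq_le (a b c : ι → ℝ≥0∞) :
    (∑' i, a i * b i * c i) ^ 2 ≤ (∑' i, a i ^ 2 * c i) * ∑' i, b i ^ 2 * c i := by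
  refine (ENNReal.mul_le_mul_iff_right (a := 2) two_ne_zero ofNat_ne_top).1 ?_
  calc 2 * (∑' i, a i * b i * c i) ^ 2
      = ∑' i, ∑' j, 2 * (a i * b j) * (a j * b i) * (c i * c j) := by
        rw [sq, tsum_mul_tsum_eq_tsum_tsum, ← ENNReal.tsum_mul_left]
        refine tsum_congr fun i => ?_
        rw [← ENNReal.tsum_mul_left]
        exact tsum_congr fun j => by ring
    _ ≤ ∑' i, ∑' j, (a i ^ 2 * c i * (b j ^ 2 * c j) + b i ^ 2 * c i * (a j ^ 2 * c j)) := by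
        gcongr with i j
        calc 2 * (a i * b j) * (a j * b i) * (c i * c j)
            ≤ ((a i * b j) ^ 2 + (a j * b i) ^ 2) * (c i * c j) := by
              gcongr; exact two_mul_mul_le_sq_add_sq _ _
          _ = _ := by ring
    _ = 2 * ((∑' i, a i ^ 2 * c i) * ∑' i, b i ^ 2 * c i) := by
        simp_rw [ENNReal.tsum_add, ← tsum_mul_tsum_eq_tsum_tsum]
        ring

lemma tsum_conv_sq_le {G : Type*} [AddCommGroup G] (a b : G → ℝ≥0∞) :
    ∑' k, (∑' l, a (k - l) * b l) ^ 2 ≤ (∑' k, a k ^ 2) * (∑' l, b l) ^ 2 := by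
  calc ∑' k, (∑' l, a (k - l) * b l) ^ 2
      ≤ ∑' k, (∑' l, a (k - l) ^ 2 * b l) * ∑' l, b l := by
        gcongr with k
        simpa using tsum_mul_mul_sq_le (fun l => a (k - l)) 1 b
    _ = (∑' k, a k ^ 2) * (∑' l, b l) ^ 2 := by
        have shift (l : G) : ∑' k, a (k - l) ^ 2 = ∑' k, a k ^ 2 :=
          (Equiv.subRight l).tsum_eq fun k => a k ^ 2
        rw [ENNReal.tsum_mul_right, ENNReal.tsum_comm]
        simp_rw [ENNReal.tsum_mul_right, shift, ENNReal.tsum_mul_left]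
        ring

theorem tsum_weight_mul_conv_sq_le {G : Type*} [AddCommGroup G] {A E r : G → ℝ≥0∞}
    {c : ℝ≥0∞} (hA : ∀ k l, A k ≤ c * (A (k - l) * E l + E (k - l) * A l))
    (hE : ∀ k, E k ≤ A k * r k) (u : G → ℝ≥0∞) :
    ∑' k, (A k * ∑' l, u (k - l) * u l) ^ 2 ≤
      (2 * c) ^ 2 * (∑' k, r k ^ 2) * (∑' k, (A k * u k) ^ 2) ^ 2 := by
  set F := fun k => A k * u k with hF
  set H := fun k => E k * u k with hH
  have conv_le (k : G) : A k * ∑' l, u (k - l) * u l ≤ 2 * c * ∑' l, F (k - l) * H l := by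
    have flip : ∑' l, H (k - l) * F l = ∑' l, F (k - l) * H l := by
      rw [← (Equiv.subLeft k).tsum_eq]
      simp [mul_comm]
    calc A k * ∑' l, u (k - l) * u l = ∑' l, A k * (u (k - l) * u l) :=
          ENNReal.tsum_mul_left.symm
      _ ≤ ∑' l, c * (F (k - l) * H l + H (k - l) * F l) := by
          refine ENNReal.tsum_le_tsum fun l => ?_
          calc A k * (u (k - l) * u l)
              ≤ c * (A (k - l) * E l + E (k - l) * A l) * (u (k - l) * u l) := by
                gcongr; exact hA k l
            _ = _ := by rw [hF, hH]; ring
      _ = 2 * c * ∑' l, F (k - l) * H l := by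
          rw [ENNReal.tsum_mul_left, ENNReal.tsum_add, flip]; ring
  have tsum_H_sq_le : (∑' l, H l) ^ 2 ≤ (∑' k, F k ^ 2) * ∑' k, r k ^ 2 := by
    calc (∑' l, H l) ^ 2 ≤ (∑' l, F l * r l * 1) ^ 2 := by
          refine pow_le_pow_left' (ENNReal.tsum_le_tsum fun l => ?_) 2
          calc H l ≤ A l * r l * u l := mul_le_mul_left (hE l) _
            _ = F l * r l * 1 := by rw [hF]; ring
      _ ≤ _ := by simpa using tsum_mul_mul_sq_le F r 1
  calc ∑' k, (A k * ∑' l, u (k - l) * u l) ^ 2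
      ≤ ∑' k, (2 * c * ∑' l, F (k - l) * H l) ^ 2 :=
        ENNReal.tsum_le_tsum fun k => pow_le_pow_left' (conv_le k) 2
    _ = (2 * c) ^ 2 * ∑' k, (∑' l, F (k - l) * H l) ^ 2 := by
        simp_rw [mul_pow, ENNReal.tsum_mul_left]
    _ ≤ (2 * c) ^ 2 * ((∑' k, F k ^ 2) * (∑' l, H l) ^ 2) := by
        gcongr; exact tsum_conv_sq_le F H
    _ ≤ (2 * c) ^ 2 * ((∑' k, F k ^ 2) * ((∑' k, F k ^ 2) * ∑' k, r k ^ 2)) := by gcongr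
    _ = _ := by ring

end ENNReal

lemma sqrt_one_add_sq_norm_add_le {E : Type*} [SeminormedAddCommGroup E] (x y : E) :
    √(1 + ‖x + y‖ ^ 2) ≤ √(1 + ‖x‖ ^ 2) + √(1 + ‖y‖ ^ 2) := by
  have hx : ‖x‖ ≤ √(1 + ‖x‖ ^ 2) := Real.le_sqrt_of_sq_le (by linarith)
  have hy : ‖y‖ ≤ √(1 + ‖y‖ ^ 2) := Real.le_sqrt_of_sq_le (by linarith)
  have hxy : ‖x + y‖ ^ 2 ≤ (‖x‖ + ‖y‖) ^ 2 := by gcongr; exact norm_add_le x y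
  refine Real.sqrt_le_iff.2 ⟨by positivity, ?_⟩
  nlinarith [Real.sq_sqrt (by positivity : 0 ≤ 1 + ‖x‖ ^ 2),
    Real.sq_sqrt (by positivity : 0 ≤ 1 + ‖y‖ ^ 2),
    mul_le_mul hx hy (norm_nonneg y) (by positivity)]

lemma Real.rpow_le_rpow_add_rpow_of_le_add {a b c p : ℝ} (ha : 0 ≤ a) (hb : 0 ≤ b) (hc : 0 ≤ c)
    (hp0 : 0 ≤ p) (hp1 : p ≤ 1) (h : a ≤ b + c) : a ^ p ≤ b ^ p + c ^ p := by
  lift b to ℝ≥0 using hb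
  lift c to ℝ≥0 using hc
  exact (Real.rpow_le_rpow ha h hp0).trans
    (by exact_mod_cast NNReal.rpow_add_le_add_rpow b c hp0 hp1)

lemma summable_one_add_sq_rpow_neg {p : ℝ} (hp : 1 / 2 < p) :
    Summable fun n : ℤ => (1 + (n : ℝ) ^ 2) ^ (-p) := by
  refine (Real.summable_abs_int_rpow (b := 2 * p) (by linarith)).of_norm_bounded_eventually ?_
  filter_upwards [Filter.eventually_cofinite_ne 0] with n hn
  have hn : (n : ℝ) ≠ 0 := by exact_mod_cast hn
  have hpow : |(n : ℝ)| ^ (-(2 * p)) = ((n : ℝ) ^ 2) ^ (-p) := by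
    rw [← sq_abs, ← Real.rpow_natCast, ← Real.rpow_mul (abs_nonneg _)]
    push_cast
    ring_nf
  rw [Real.norm_of_nonneg (by positivity), hpow]
  exact Real.rpow_le_rpow_of_nonpos (by positivity) (by linarith) (by linarith)

lemma summable_prod_comp {α : Type*} {g : α → ℝ} (hg0 : ∀ a, 0 ≤ g a) (hg : Summable g) :
    ∀ d : ℕ, Summable fun k : Fin d → α => ∏ i, g (k i)
  | 0 => Summable.of_finite
  | d + 1 => by
    refine (Fin.consEquiv fun _ => α).summable_iff.1 ?_
    refine (hg.mul_of_nonneg (summable_prod_comp hg0 hg d) hg0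
      fun k => Finset.prod_nonneg fun i _ => hg0 (k i)).congr fun p => ?_
    simp [Fin.prod_univ_succ]

section Bracket

variable (d : ℕ) (t : ℝ)

noncomputable def freqVec : (Fin d → ℤ) →+ EuclideanSpace ℝ (Fin d ⊕ Fin d) :=
  AddMonoidHom.mk' (fun k => WithLp.toLp 2 (Sum.elim (fun i => (k i : ℝ)) fun i => k i * t))
    fun k l => by ext (i | i) <;> simp [add_mul]

lemma brkt_eq_sqrt_one_add_norm_sq (k : Fin d → ℤ) :
    brkt d t k = √(1 + ‖freqVec d t k‖ ^ 2) := by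
  simp [brkt, freqVec, EuclideanSpace.real_norm_sq_eq, Fintype.sum_sum_type, mul_pow,
    Finset.mul_sum, add_assoc, mul_comm]

lemma brkt_le_brkt_sub_add_brkt (k l : Fin d → ℤ) :
    brkt d t k ≤ brkt d t (k - l) + brkt d t l := by
  simpa only [brkt_eq_sqrt_one_add_norm_sq, map_sub, sub_add_cancel] using
    sqrt_one_add_sq_norm_add_le (freqVec d t (k - l)) (freqVec d t l)

lemma one_le_brkt (k : Fin d → ℤ) : 1 ≤ brkt d t k := by
  rw [brkt_eq_sqrt_one_add_norm_sq]
  exact Real.one_le_sqrt.2 (by simp)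

lemma brkt_pos (k : Fin d → ℤ) : 0 < brkt d t k :=
  zero_lt_one.trans_le (one_le_brkt d t k)

lemma brkt_zero_le_brkt (k : Fin d → ℤ) : brkt d 0 k ≤ brkt d t k := by
  refine Real.sqrt_le_sqrt ?_
  simp only [ne_eq, OfNat.ofNat_ne_zero, not_false_eq_true, zero_pow, zero_mul, add_zero,
    le_add_iff_nonneg_right]
  positivity

lemma brkt_zero (k : Fin d → ℤ) : brkt d 0 k = √(1 + ∑ i, ((k i : ℝ)) ^ 2) := by
  simp [brkt]

lemma summable_brkt_zero_rpow_neg {s : ℝ} (hs : (d : ℝ) < s) :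
    Summable fun k : Fin d → ℤ => brkt d 0 k ^ (-s) := by
  rcases Nat.eq_zero_or_pos d with rfl | hd
  · exact Summable.of_finite
  have hd : (0 : ℝ) < d := by exact_mod_cast hd
  set p := s / (2 * d)
  have hp : 1 / 2 < p := by rw [lt_div_iff₀ (by positivity)]; linarith
  refine (summable_prod_comp (fun n => by positivity) (summable_one_add_sq_rpow_neg hp) d
    ).of_nonneg_of_le (fun k => Real.rpow_nonneg (brkt_pos d 0 k).le _) fun k => ?_
  have hS : 0 ≤ ∑ i, ((k i : ℝ)) ^ 2 := by positivity
  calc brkt d 0 k ^ (-s) = ((1 + ∑ i, ((k i : ℝ)) ^ 2) ^ d) ^ (-p) := by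
        rw [brkt_zero, Real.sqrt_eq_rpow, ← Real.rpow_mul (by positivity), ← Real.rpow_natCast,
          ← Real.rpow_mul (by positivity)]
        congr 1
        simp only [p]
        field_simp
    _ ≤ (∏ i, (1 + ((k i : ℝ)) ^ 2)) ^ (-p) := by
        refine Real.rpow_le_rpow_of_nonpos (by positivity) ?_ (by linarith)
        calc ∏ i, (1 + ((k i : ℝ)) ^ 2) ≤ ∏ _i : Fin d, (1 + ∑ j, ((k j : ℝ)) ^ 2) := by
              gcongr with i
              exact Finset.single_le_sum (fun j _ => sq_nonneg ((k j : ℝ))) (Finset.mem_univ i)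
          _ = (1 + ∑ i, ((k i : ℝ)) ^ 2) ^ d := by simp
    _ = ∏ i, (1 + ((k i : ℝ)) ^ 2) ^ (-p) :=
        (Real.finsetProd_rpow _ _ (fun i _ => by positivity) _).symm

lemma brkt_rpow_neg_sq_le {σ : ℝ} (hσ : 0 ≤ σ) (k : Fin d → ℤ) :
    (brkt d t k ^ (-σ)) ^ 2 ≤ brkt d 0 k ^ (-(2 * σ)) := by
  rw [← Real.rpow_mul_natCast (brkt_pos d t k).le]
  refine (Real.rpow_le_rpow_of_nonpos (brkt_pos d 0 k) (brkt_zero_le_brkt d t k)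
    (by push_cast; linarith)).trans_eq ?_
  push_cast; ring_nf

lemma exists_tsum_ofReal_brkt_rpow_neg_sq_le {σ : ℝ} (hσ : (d : ℝ) / 2 < σ) :
    ∃ K : ℝ≥0∞, K ≠ 0 ∧ K ≠ ⊤ ∧
      ∀ t, ∑' k : Fin d → ℤ, ENNReal.ofReal (brkt d t k ^ (-σ)) ^ 2 ≤ K := by
  have hσ0 : 0 ≤ σ := (by positivity : (0 : ℝ) ≤ d / 2).trans hσ.le
  refine ⟨∑' k : Fin d → ℤ, ENNReal.ofReal (brkt d 0 k ^ (-(2 * σ))), ?_, ?_, fun t => ?_⟩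
  · exact ((ENNReal.ofReal_pos.2 (Real.rpow_pos_of_pos (brkt_pos d 0 0) _)).trans_le
      (ENNReal.le_tsum 0)).ne'
  · rw [← ENNReal.ofReal_tsum_of_nonneg (fun k => Real.rpow_nonneg (brkt_pos d 0 k).le _)
      (summable_brkt_zero_rpow_neg d (s := 2 * σ) (by linarith))]
    exact ENNReal.ofReal_ne_top
  · refine ENNReal.tsum_le_tsum fun k => ?_
    rw [← ENNReal.ofReal_pow (Real.rpow_nonneg (brkt_pos d t k).le _)]
    exact ENNReal.ofReal_le_ofReal (brkt_rpow_neg_sq_le d t hσ0 k)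

end Bracket

noncomputable def expWeight (d : ℕ) (γ z t : ℝ) (k : Fin d → ℤ) : ℝ :=
  Real.exp (z * brkt d t k ^ γ)

section Weight

variable {d : ℕ} {γ z σ t : ℝ}

lemma expWeight_pos (k : Fin d → ℤ) : 0 < expWeight d γ z t k :=
  Real.exp_pos _

lemma wA_nonneg (k : Fin d → ℤ) : 0 ≤ wA d γ z σ t k :=
  mul_nonneg (Real.exp_pos _).le (Real.rpow_nonneg (brkt_pos d t k).le _)

lemma expWeight_le_mul (hz : 0 ≤ z) (hγ0 : 0 ≤ γ) (hγ1 : γ ≤ 1) (k l : Fin d → ℤ) :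
    expWeight d γ z t k ≤ expWeight d γ z t (k - l) * expWeight d γ z t l := by
  rw [expWeight, expWeight, expWeight, ← Real.exp_add, ← mul_add]
  gcongr
  exact Real.rpow_le_rpow_add_rpow_of_le_add (brkt_pos d t k).le (brkt_pos d t _).le
    (brkt_pos d t l).le hγ0 hγ1 (brkt_le_brkt_sub_add_brkt d t k l)

lemma ofReal_wA (hσ : 0 ≤ σ) (k : Fin d → ℤ) :
    ENNReal.ofReal (wA d γ z σ t k) =
      ENNReal.ofReal (expWeight d γ z t k) * ENNReal.ofReal (brkt d t k) ^ σ := by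
  rw [wA, ENNReal.ofReal_mul (Real.exp_pos _).le,
    ENNReal.ofReal_rpow_of_nonneg (brkt_pos d t k).le hσ, expWeight]

lemma ofReal_wA_le (hz : 0 ≤ z) (hγ0 : 0 ≤ γ) (hγ1 : γ ≤ 1) (hσ : 0 ≤ σ) (k l : Fin d → ℤ) :
    ENNReal.ofReal (wA d γ z σ t k) ≤
      2 ^ σ * (ENNReal.ofReal (wA d γ z σ t (k - l)) * ENNReal.ofReal (expWeight d γ z t l) +
        ENNReal.ofReal (expWeight d γ z t (k - l)) * ENNReal.ofReal (wA d γ z σ t l)) := by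
  have hexp : ENNReal.ofReal (expWeight d γ z t k) ≤
      ENNReal.ofReal (expWeight d γ z t (k - l)) * ENNReal.ofReal (expWeight d γ z t l) := by
    rw [← ENNReal.ofReal_mul (expWeight_pos _).le]
    exact ENNReal.ofReal_le_ofReal (expWeight_le_mul hz hγ0 hγ1 k l)
  have hbrkt : ENNReal.ofReal (brkt d t k) ^ σ ≤
      2 ^ σ * (ENNReal.ofReal (brkt d t (k - l)) ^ σ + ENNReal.ofReal (brkt d t l) ^ σ) := by
    refine (ENNReal.rpow_le_rpow ?_ hσ).trans
      (ENNReal.add_rpow_le_two_rpow_mul_rpow_add_rpow _ _ hσ)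
    rw [← ENNReal.ofReal_add (brkt_pos d t _).le (brkt_pos d t l).le]
    exact ENNReal.ofReal_le_ofReal (brkt_le_brkt_sub_add_brkt d t k l)
  calc ENNReal.ofReal (wA d γ z σ t k)
      = ENNReal.ofReal (expWeight d γ z t k) * ENNReal.ofReal (brkt d t k) ^ σ := ofReal_wA hσ k
    _ ≤ ENNReal.ofReal (expWeight d γ z t (k - l)) * ENNReal.ofReal (expWeight d γ z t l) *
        (2 ^ σ * (ENNReal.ofReal (brkt d t (k - l)) ^ σ + ENNReal.ofReal (brkt d t l) ^ σ)) :=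
        mul_le_mul' hexp hbrkt
    _ = _ := by rw [ofReal_wA hσ, ofReal_wA hσ]; ring

lemma ofReal_expWeight_eq_mul (k : Fin d → ℤ) :
    ENNReal.ofReal (expWeight d γ z t k) =
      ENNReal.ofReal (wA d γ z σ t k) * ENNReal.ofReal (brkt d t k ^ (-σ)) := by
  rw [← ENNReal.ofReal_mul (wA_nonneg k), wA, mul_assoc, ← Real.rpow_add (brkt_pos d t k),
    add_neg_cancel, Real.rpow_zero, mul_one, expWeight]

lemma ofReal_wA_mul_enorm_sq (v : (Fin d → ℤ) → ℂ) (k : Fin d → ℤ) :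
    (ENNReal.ofReal (wA d γ z σ t k) * ‖v k‖ₑ) ^ 2 =
      ENNReal.ofReal (wA d γ z σ t k ^ 2 * ‖v k‖ ^ 2) := by
  rw [← ofReal_norm, ← ENNReal.ofReal_mul (wA_nonneg k),
    ← ENNReal.ofReal_pow (mul_nonneg (wA_nonneg k) (norm_nonneg _)), mul_pow]

lemma tsum_ofReal_wA_mul_enorm_sq {v : (Fin d → ℤ) → ℂ}
    (hv : Summable fun k => wA d γ z σ t k ^ 2 * ‖v k‖ ^ 2) :
    ∑' k, (ENNReal.ofReal (wA d γ z σ t k) * ‖v k‖ₑ) ^ 2 =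
      ENNReal.ofReal (gnorm d γ z σ t v ^ 2) := by
  have hnonneg (k : Fin d → ℤ) : 0 ≤ wA d γ z σ t k ^ 2 * ‖v k‖ ^ 2 := by positivity
  simp_rw [ofReal_wA_mul_enorm_sq, gnorm, Real.sq_sqrt (tsum_nonneg hnonneg)]
  exact (ENNReal.ofReal_tsum_of_nonneg hnonneg hv).symm

lemma gnorm_le_of_tsum_le {v : (Fin d → ℤ) → ℂ} {B : ℝ} (hB : 0 ≤ B)
    (h : ∑' k, (ENNReal.ofReal (wA d γ z σ t k) * ‖v k‖ₑ) ^ 2 ≤ ENNReal.ofReal (B ^ 2)) :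
    gnorm d γ z σ t v ≤ B := by
  simp_rw [ofReal_wA_mul_enorm_sq] at h
  refine Real.sqrt_le_iff.2 ⟨hB, ?_⟩
  calc ∑' k, wA d γ z σ t k ^ 2 * ‖v k‖ ^ 2
      = ∑' k, (ENNReal.ofReal (wA d γ z σ t k ^ 2 * ‖v k‖ ^ 2)).toReal :=
        tsum_congr fun k => (ENNReal.toReal_ofReal (by positivity)).symm
    _ = (∑' k, ENNReal.ofReal (wA d γ z σ t k ^ 2 * ‖v k‖ ^ 2)).toReal :=
        (ENNReal.tsum_toReal_eq fun _ => ENNReal.ofReal_ne_top).symm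
    _ ≤ B ^ 2 := ENNReal.toReal_le_of_le_ofReal (sq_nonneg B) h

lemma enorm_convFC_le (f g : (Fin d → ℤ) → ℂ) (k : Fin d → ℤ) :
    ‖convFC d f g k‖ₑ ≤ ∑' l, ‖f (k - l)‖ₑ * ‖g l‖ₑ := by
  simpa only [convFC, enorm_mul] using enorm_tsum_le_tsum_enorm (f := fun l => f (k - l) * g l)

lemma tsum_wA_mul_enorm_convFC_sq_le (hz : 0 ≤ z) (hγ0 : 0 ≤ γ) (hγ1 : γ ≤ 1) (hσ : 0 ≤ σ)
    (w : (Fin d → ℤ) → ℂ) :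
    ∑' k, (ENNReal.ofReal (wA d γ z σ t k) * ‖convFC d w w k‖ₑ) ^ 2 ≤
      (2 * 2 ^ σ) ^ 2 * (∑' k, ENNReal.ofReal (brkt d t k ^ (-σ)) ^ 2) *
        (∑' k, (ENNReal.ofReal (wA d γ z σ t k) * ‖w k‖ₑ) ^ 2) ^ 2 :=
  calc ∑' k, (ENNReal.ofReal (wA d γ z σ t k) * ‖convFC d w w k‖ₑ) ^ 2
      ≤ ∑' k, (ENNReal.ofReal (wA d γ z σ t k) * ∑' l, ‖w (k - l)‖ₑ * ‖w l‖ₑ) ^ 2 := by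
        gcongr with k; exact enorm_convFC_le w w k
    _ ≤ _ := ENNReal.tsum_weight_mul_conv_sq_le (ofReal_wA_le hz hγ0 hγ1 hσ)
          (fun k => (ofReal_expWeight_eq_mul k).le) _

end Weight

theorem gevrey_algebra_general (d : ℕ) (σ γ : ℝ) (hσ : (d : ℝ) / 2 < σ)
    (hγ0 : 0 < γ) (hγ1 : γ ≤ 1) :
    ∃ C > 0, ∀ (z t : ℝ), 0 ≤ z → ∀ w : (Fin d → ℤ) → ℂ,
      Summable (fun k : Fin d → ℤ => wA d γ z σ t k ^ 2 * ‖w k‖ ^ 2) →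
      gnorm d γ z σ t (convFC d w w) ≤ C * gnorm d γ z σ t w ^ 2 := by
  have hσ0 : 0 ≤ σ := (by positivity : (0 : ℝ) ≤ d / 2).trans hσ.le
  obtain ⟨K, hK_zero, hK_top, hK⟩ := exists_tsum_ofReal_brkt_rpow_neg_sq_le d hσ
  set X : ℝ≥0∞ := (2 * 2 ^ σ) ^ 2 * K with hX
  have hX_top : X ≠ ⊤ := by finiteness
  refine ⟨√X.toReal, Real.sqrt_pos.2 (ENNReal.toReal_pos (by positivity) hX_top),
    fun z t hz w hw => gnorm_le_of_tsum_le (by positivity) ?_⟩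
  calc ∑' k, (ENNReal.ofReal (wA d γ z σ t k) * ‖convFC d w w k‖ₑ) ^ 2
      ≤ (2 * 2 ^ σ) ^ 2 * (∑' k, ENNReal.ofReal (brkt d t k ^ (-σ)) ^ 2) *
          ENNReal.ofReal (gnorm d γ z σ t w ^ 2) ^ 2 := by
        rw [← tsum_ofReal_wA_mul_enorm_sq hw]
        exact tsum_wA_mul_enorm_convFC_sq_le hz hγ0.le hγ1 hσ0 w
    _ ≤ X * ENNReal.ofReal (gnorm d γ z σ t w ^ 2) ^ 2 := by
        rw [hX]; gcongr; exact hK t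
    _ = ENNReal.ofReal ((√X.toReal * gnorm d γ z σ t w ^ 2) ^ 2) := by
        rw [mul_pow, Real.sq_sqrt ENNReal.toReal_nonneg, ENNReal.ofReal_mul ENNReal.toReal_nonneg,
          ENNReal.ofReal_toReal hX_top, ENNReal.ofReal_pow (sq_nonneg (gnorm d γ z σ t w))]

/-- Algebra property of the Gevrey space: for `σ > d/2` there is `C` such that, for any function
`ω` on `𝕋^d` (described by its Fourier coefficients `ω̂`) with finite Gevrey norm,
`‖A(ω²)‖_{L²} ≤ C ‖Aω‖²_{L²}`, where the Fourier coefficients of `ω²` are `ω̂ * ω̂`. -/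
theorem gevrey_algebra (d : ℕ) (hd : 1 ≤ d) (σ γ : ℝ) (hσ : (d : ℝ) / 2 < σ)
    (hγ0 : 0 < γ) (hγ1 : γ ≤ 1) :
    ∃ C > 0, ∀ (z t : ℝ), 0 ≤ z → ∀ w : (Fin d → ℤ) → ℂ,
      Summable (fun k : Fin d → ℤ => wA d γ z σ t k ^ 2 * ‖w k‖ ^ 2) →
      gnorm d γ z σ t (convFC d w w) ≤ C * gnorm d γ z σ t w ^ 2 :=
  gevrey_algebra_general d σ γ hσ hγ0 hγ1
end
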